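/- Let d ≥ 1, s > 0 and 0 < q ≤ ∞. Then M(B^s_{∞,q}(ℝ^d)) = B^s_{∞,q}(ℝ^d) in the sense of equivalent quasi-norms: a function f is a pointwise multiplier of B^s_{∞,q}(ℝ^d) if and only if f ∈ B^s_{∞,q}(ℝ^d), and the multiplier quasi-norm is equivalent to ‖f | B^s_{∞,q}(ℝ^d)‖. -/

import Mathlib

open MeasureTheory ENNReal NNReal

noncomputable section

abbrev Euc (d : ℕ) := EuclideanSpace ℝ (Fin d)

def zpt {d : ℕ} (μ : Fin d → ℤ) : Euc d := WithLp.toLp 2 (fun i => (μ i : ℝ))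

/-- iterated difference `Δ_h^m f` -/
def fdiff {d : ℕ} (h : Euc d) (m : ℕ) (f : Euc d → ℂ) (x : Euc d) : ℂ :=
  ∑ ℓ ∈ Finset.range (m + 1), (-1 : ℂ) ^ (m - ℓ) * (m.choose ℓ : ℂ) * f (x + (ℓ : ℝ) • h)

/-- modulus of smoothness `ω_m(f,t)_p` -/
def omegaMod {d : ℕ} (m : ℕ) (p : ℝ≥0∞) (f : Euc d → ℂ) (t : ℝ) : ℝ≥0∞ :=
  ⨆ (h : Euc d) (_ : ‖h‖ < t), eLpNorm (fdiff h m f) p volume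

def lqNat (q : ℝ≥0∞) (a : ℕ → ℝ≥0∞) : ℝ≥0∞ :=
  if q = ∞ then ⨆ k, a k else (∑' k, a k ^ q.toReal) ^ (1 / q.toReal)

def lpZ {d : ℕ} (p : ℝ≥0∞) (a : (Fin d → ℤ) → ℝ≥0∞) : ℝ≥0∞ :=
  if p = ∞ then ⨆ μ, a μ else (∑' μ, a μ ^ p.toReal) ^ (1 / p.toReal)

/-- the Besov quasi-norm `‖f | B^s_{p,q}(ℝ^d)‖` defined via differences (with parameter `m > s`) -/
def besovNorm (d : ℕ) (s : ℝ) (p q : ℝ≥0∞) (m : ℕ) (f : Euc d → ℂ) : ℝ≥0∞ :=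
  eLpNorm f p volume +
    lqNat q fun k => (2 : ℝ≥0∞) ^ ((k : ℝ) * s) * omegaMod m p f ((2 : ℝ) ^ (-(k : ℝ)))

def MemBesov (d : ℕ) (s : ℝ) (p q : ℝ≥0∞) (m : ℕ) (f : Euc d → ℂ) : Prop :=
  AEStronglyMeasurable f volume ∧ besovNorm d s p q m f < ∞

/-- `f` is a pointwise multiplier of `B^s_{p,q}(ℝ^d)` -/
def MemMult (d : ℕ) (s : ℝ) (p q : ℝ≥0∞) (m : ℕ) (f : Euc d → ℂ) : Prop :=
  ∀ g, MemBesov d s p q m g → MemBesov d s p q m fun x => f x * g x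

def multNorm (d : ℕ) (s : ℝ) (p q : ℝ≥0∞) (m : ℕ) (f : Euc d → ℂ) : ℝ≥0∞ :=
  ⨆ (g : Euc d → ℂ) (_ : MemBesov d s p q m g ∧ besovNorm d s p q m g ≤ 1),
    besovNorm d s p q m fun x => f x * g x

def unifNorm (d : ℕ) (s : ℝ) (p q : ℝ≥0∞) (m : ℕ) (ψ : Euc d → ℝ) (f : Euc d → ℂ) : ℝ≥0∞ :=
  ⨆ lam : Euc d, besovNorm d s p q m fun x => f x * (ψ (x - lam) : ℂ)

def MemBesovUnif (d : ℕ) (s : ℝ) (p q : ℝ≥0∞) (m : ℕ) (ψ : Euc d → ℝ) (f : Euc d → ℂ) : Prop :=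
  AEStronglyMeasurable f volume ∧ unifNorm d s p q m ψ f < ∞

/-- `ψ_μ · f` -/
def psiMul {d : ℕ} (ψ : Euc d → ℝ) (μ : Fin d → ℤ) (f : Euc d → ℂ) : Euc d → ℂ :=
  fun x => (ψ (x - zpt μ) : ℂ) * f x

/-- the quasi-norm of the localized space `B^s_{p,q,v}(ℝ^d)` -/
def locNorm (d : ℕ) (s : ℝ) (p q v : ℝ≥0∞) (m : ℕ) (ψ : Euc d → ℝ) (f : Euc d → ℂ) : ℝ≥0∞ :=
  lpZ v fun μ => besovNorm d s p q m (psiMul ψ μ f)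

def MemBesovLoc (d : ℕ) (s : ℝ) (p q v : ℝ≥0∞) (m : ℕ) (ψ : Euc d → ℝ) (f : Euc d → ℂ) : Prop :=
  LocallyIntegrable f volume ∧ locNorm d s p q v m ψ f < ∞

/-- `(Σ_μ C_μ ψ_μ) · f` -/
def combo {d : ℕ} (ψ : Euc d → ℝ) (C : (Fin d → ℤ) → ℝ) (f : Euc d → ℂ) : Euc d → ℂ :=
  fun x => ((∑' μ : Fin d → ℤ, C μ * ψ (x - zpt μ) : ℝ) : ℂ) * f x

/-- the `ℓ_p(ℤ^d)` quasi-norm of a sequence of coefficients -/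
def lpZcoef {d : ℕ} (p : ℝ≥0∞) (C : (Fin d → ℤ) → ℝ) : ℝ≥0∞ :=
  lpZ p fun μ => (‖C μ‖₊ : ℝ≥0∞)

def lqCons (q : ℝ≥0∞) (x : ℝ≥0∞) (a : ℕ → ℝ≥0∞) : ℝ≥0∞ :=
  if q = ∞ then x ⊔ ⨆ k, a k
  else (x ^ q.toReal + ∑' k, a k ^ q.toReal) ^ (1 / q.toReal)

/-- the quasi-norm of the space `M^s_{p,q}(ℝ^d)` -/
def msNorm (d : ℕ) (s : ℝ) (p q : ℝ≥0∞) (m : ℕ) (ψ : Euc d → ℝ) (f : Euc d → ℂ) : ℝ≥0∞ :=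
  ⨆ (C : (Fin d → ℤ) → ℝ) (_ : lpZcoef p C ≤ 1),
    lqCons q (eLpNorm (combo ψ C f) p volume)
      (fun k => (2 : ℝ≥0∞) ^ ((k : ℝ) * s) *
        ⨆ (h : Euc d) (_ : ‖h‖ < (2 : ℝ) ^ (-(k : ℝ))),
          lpZ p fun μ => (‖C μ‖₊ : ℝ≥0∞) * eLpNorm (fdiff h m (psiMul ψ μ f)) p volume)

def MemMs (d : ℕ) (s : ℝ) (p q : ℝ≥0∞) (m : ℕ) (ψ : Euc d → ℝ) (f : Euc d → ℂ) : Prop :=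
  LocallyIntegrable f volume ∧ msNorm d s p q m ψ f < ∞

/-- membership in `B^s_{p,q}(Ω)` (functions on `ℝ^d` considered via their values on `Ω`) -/
def MemBesovOn (d : ℕ) (s : ℝ) (p q : ℝ≥0∞) (m : ℕ) (Ω : Set (Euc d)) (g : Euc d → ℂ) : Prop :=
  ∃ f, MemBesov d s p q m f ∧ Set.EqOn f g Ω

def besovNormOn (d : ℕ) (s : ℝ) (p q : ℝ≥0∞) (m : ℕ) (Ω : Set (Euc d)) (g : Euc d → ℂ) : ℝ≥0∞ :=
  ⨅ (f : Euc d → ℂ) (_ : MemBesov d s p q m f ∧ Set.EqOn f g Ω), besovNorm d s p q m f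

def multNormOn (d : ℕ) (s : ℝ) (p q : ℝ≥0∞) (m : ℕ) (Ω : Set (Euc d)) (f : Euc d → ℂ) : ℝ≥0∞ :=
  ⨆ (g : Euc d → ℂ) (_ : MemBesovOn d s p q m Ω g ∧ besovNormOn d s p q m Ω g ≤ 1),
    besovNormOn d s p q m Ω fun x => f x * g x

end

/-!
The constant `1` lies in `B^s_{∞,q}` with norm `1`, so `‖f‖ = ‖f · 1‖ ≤ ‖f‖_M`. Conversely it
suffices that `B^s_{∞,q}` is an algebra. The Leibniz rule for differences gives
`ω_m(fg, t) ≤ Σ_j C(m,j) ω_j(f,t) ω_{m-j}(g,t)`; writing `s = α + β` with `α = sj/m < j` and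
`β = s(m-j)/m < m-j`, it remains to bound `2^{kα} ω_j(f, 2^{-k})` in `ℓ_∞` and
`2^{kβ} ω_{m-j}(g, 2^{-k})` in `ℓ_q` by Besov norms. This is done by climbing from order `i` to
order `m` with Marchaud's inequality `2^i ω_i(f,t) ≤ ω_i(f,2t) + i 2^i ω_{i+1}(f,t)`: for
`A_k = 2^{kα} ω_i(f, 2^{-k})` and `B_k = 2^{kα} ω_{i+1}(f, 2^{-k})` it gives the recursion
`A_{k+1} ≤ 2^{α-i} A_k + i B_{k+1}`, which a discrete Hardy inequality solves in `ℓ_q` as `α < i`.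
-/

open Finset fwdDiff fwdDiff_aux

section ForwardDifference

variable {M : Type*} [AddCommMonoid M] (h : M)

theorem fwdDiff_mul {R : Type*} [CommRing R] (f g : M → R) :
    Δ_[h] (f * g) = Δ_[h] f * (fun x => g (x + h)) + f * Δ_[h] g := by
  ext x
  simp only [fwdDiff, Pi.mul_apply, Pi.add_apply]
  ring

theorem fwdDiff_iter_mul {R : Type*} [CommRing R] (m : ℕ) (f g : M → R) (x : M) :
    (Δ_[h])^[m] (f * g) x = ∑ j ∈ range (m + 1),
      (m.choose j : R) * ((Δ_[h])^[j] f x * (Δ_[h])^[m - j] g (x + j • h)) := by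
  induction m generalizing f g with
  | zero => simp
  | succ m ih =>
    rw [Function.iterate_succ_apply, fwdDiff_mul, fwdDiff_iter_add, Pi.add_apply, ih, ih,
      sum_choose_succ_mul (fun i k => (Δ_[h])^[i] f x * (Δ_[h])^[k] g (x + i • h)), add_comm]
    congr 1
    · refine sum_congr rfl fun j hj => ?_
      rw [← Function.iterate_succ_apply, Nat.succ_eq_add_one,
        Nat.sub_add_comm (Nat.lt_succ_iff.mp (mem_range.mp hj))]
    · refine sum_congr rfl fun j _ => ?_
      rw [← Function.iterate_succ_apply, fwdDiff_iter_comp_add, add_assoc, ← succ_nsmul]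

theorem fwdDiff_iter_add_self {G : Type*} [AddCommGroup G] (f : M → G) (j : ℕ) (y : M) :
    (Δ_[h + h])^[j] f y = ∑ l ∈ range (j + 1), j.choose l • (Δ_[h])^[j] f (y + l • h) := by
  have hfactor : fwdDiffₗ M G (h + h) = (shiftₗ M G h + 1) * fwdDiffₗ M G h := by
    ext F z
    simp only [fwdDiffₗ_apply, Module.End.mul_apply, LinearMap.add_apply, Module.End.one_apply,
      Pi.add_apply, shiftₗ_apply, fwdDiff, ← add_assoc]
    abel
  have hcomm : Commute (shiftₗ M G h + 1) (fwdDiffₗ M G h) :=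
    ((Commute.refl _).add_left (Commute.one_left _)).add_left (Commute.one_left _)
  have hbinom := (Commute.one_right (shiftₗ M G h)).add_pow j
  have := congrFun (LinearMap.congr_fun (congrArg (· ^ j) hfactor) f) y
  simp only [hcomm.mul_pow, hbinom, one_pow, mul_one] at this
  rw [← coe_fwdDiffₗ_pow, this]
  simp [Module.End.mul_apply, LinearMap.sum_apply, shiftₗ_pow_apply, coe_fwdDiffₗ_pow]

end ForwardDifference

section Translation

variable {G E : Type*} [AddCommGroup G] [MeasurableSpace G] [MeasurableAdd G]
  {μ : Measure G} [μ.IsAddRightInvariant] [NormedAddCommGroup E] {p : ℝ≥0∞} {F : G → E}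

theorem MeasureTheory.AEStronglyMeasurable.comp_add_right (hF : AEStronglyMeasurable F μ) (v : G) :
    AEStronglyMeasurable (fun x => F (x + v)) μ :=
  hF.comp_quasiMeasurePreserving (measurePreserving_add_right μ v).quasiMeasurePreserving

theorem eLpNorm_comp_add_right (hF : AEStronglyMeasurable F μ) (v : G) :
    eLpNorm (fun x => F (x + v)) p μ = eLpNorm F p μ :=
  eLpNorm_comp_measurePreserving hF (measurePreserving_add_right μ v)

theorem MeasureTheory.AEStronglyMeasurable.fwdDiff_iter (hF : AEStronglyMeasurable F μ) (h : G)
    (n : ℕ) :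
    AEStronglyMeasurable ((Δ_[h])^[n] F) μ := by
  induction n with
  | zero => exact hF
  | succ n ih =>
    rw [Function.iterate_succ_apply']
    exact (ih.comp_add_right h).sub ih

theorem eLpNorm_fwdDiff_le (hF : AEStronglyMeasurable F μ) (hp : 1 ≤ p) (h : G) :
    eLpNorm (Δ_[h] F) p μ ≤ 2 * eLpNorm F p μ := by
  calc eLpNorm (Δ_[h] F) p μ ≤ eLpNorm (fun x => F (x + h)) p μ + eLpNorm F p μ :=
        eLpNorm_sub_le (hF.comp_add_right h) hF hp
    _ = 2 * eLpNorm F p μ := by rw [eLpNorm_comp_add_right hF, two_mul]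

theorem eLpNorm_fwdDiff_iter_le (hF : AEStronglyMeasurable F μ) (hp : 1 ≤ p) (h : G) (n : ℕ) :
    eLpNorm ((Δ_[h])^[n] F) p μ ≤ 2 ^ n * eLpNorm F p μ := by
  induction n with
  | zero => simp
  | succ n ih =>
    rw [Function.iterate_succ_apply', pow_succ', mul_assoc]
    exact (eLpNorm_fwdDiff_le (hF.fwdDiff_iter h n) hp h).trans (by gcongr)

theorem eLpNorm_comp_add_nsmul_sub_le (hF : AEStronglyMeasurable F μ) (hp : 1 ≤ p) (h : G)
    (l : ℕ) : eLpNorm (fun x => F (x + l • h) - F x) p μ ≤ l * eLpNorm (Δ_[h] F) p μ := by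
  induction l with
  | zero => simp
  | succ l ih =>
    have hsplit : (fun x => F (x + (l + 1) • h) - F x)
        = (fun x => Δ_[h] F (x + l • h)) + fun x => F (x + l • h) - F x := by
      ext x
      simp only [fwdDiff, Pi.add_apply, succ_nsmul, add_assoc]
      abel
    have hΔ : AEStronglyMeasurable (Δ_[h] F) μ := hF.fwdDiff_iter h 1
    calc eLpNorm (fun x => F (x + (l + 1) • h) - F x) p μ
        ≤ eLpNorm (fun x => Δ_[h] F (x + l • h)) p μ
            + eLpNorm (fun x => F (x + l • h) - F x) p μ := by
          rw [hsplit]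
          exact eLpNorm_add_le (hΔ.comp_add_right _) ((hF.comp_add_right _).sub hF) hp
      _ ≤ eLpNorm (Δ_[h] F) p μ + l * eLpNorm (Δ_[h] F) p μ := by
          rw [eLpNorm_comp_add_right hΔ]
          gcongr
      _ = (l + 1 : ℕ) * eLpNorm (Δ_[h] F) p μ := by push_cast; ring

variable [NormedSpace ℝ E]

theorem two_pow_mul_eLpNorm_fwdDiff_iter_le (hF : AEStronglyMeasurable F μ) (hp : 1 ≤ p) (h : G)
    (j : ℕ) : 2 ^ j * eLpNorm ((Δ_[h])^[j] F) p μ ≤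
      eLpNorm ((Δ_[h + h])^[j] F) p μ + j * 2 ^ j * eLpNorm ((Δ_[h])^[j + 1] F) p μ := by
  set D := (Δ_[h])^[j] F
  have hD : AEStronglyMeasurable D μ := hF.fwdDiff_iter h j
  have hR : ∀ l : ℕ, AEStronglyMeasurable (fun x => D (x + l • h) - D x) μ :=
    fun l => (hD.comp_add_right (l • h)).sub hD
  have hid : 2 ^ j • D = (Δ_[h + h])^[j] F
      - ∑ l ∈ range (j + 1), j.choose l • fun x => D (x + l • h) - D x := by
    ext y
    simp only [Pi.sub_apply, Pi.smul_apply, Finset.sum_apply, fwdDiff_iter_add_self, smul_sub,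
      sum_sub_distrib, ← sum_smul, Nat.sum_range_choose]
    exact (_root_.sub_sub_cancel _ _).symm
  calc 2 ^ j * eLpNorm D p μ = eLpNorm (2 ^ j • D) p μ := by rw [eLpNorm_nsmul]; push_cast; rfl
    _ ≤ eLpNorm ((Δ_[h + h])^[j] F) p μ
          + eLpNorm (∑ l ∈ range (j + 1), j.choose l • fun x => D (x + l • h) - D x) p μ := by
        rw [hid]
        exact eLpNorm_sub_le (hF.fwdDiff_iter _ j)
          (Finset.aestronglyMeasurable_sum _ fun l _ => (hR l).const_smul _) hp
    _ ≤ eLpNorm ((Δ_[h + h])^[j] F) p μ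
          + ∑ l ∈ range (j + 1), j.choose l * (j * eLpNorm (Δ_[h] D) p μ) := by
        gcongr
        refine (eLpNorm_sum_le (fun l _ => (hR l).const_smul _) hp).trans
          (sum_le_sum fun l hl => ?_)
        rw [eLpNorm_nsmul]
        gcongr
        refine (eLpNorm_comp_add_nsmul_sub_le hD hp h l).trans ?_
        gcongr
        exact_mod_cast Nat.lt_succ_iff.mp (mem_range.mp hl)
    _ = eLpNorm ((Δ_[h + h])^[j] F) p μ + j * 2 ^ j * eLpNorm ((Δ_[h])^[j + 1] F) p μ := by
        rw [← sum_mul, ← Nat.cast_sum, Nat.sum_range_choose, Function.iterate_succ_apply']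
        push_cast
        ring

end Translation

theorem ENNReal.rpow_add_le_two_rpow_mul_rpow_add_rpow (x y : ℝ≥0∞) {e : ℝ} (he : 0 ≤ e) :
    (x + y) ^ e ≤ 2 ^ e * (x ^ e + y ^ e) := by
  calc (x + y) ^ e ≤ (2 * max x y) ^ e := by
        gcongr
        rw [two_mul]
        exact add_le_add (le_max_left x y) (le_max_right x y)
    _ ≤ 2 ^ e * (x ^ e + y ^ e) := by
        rw [ENNReal.mul_rpow_of_nonneg _ _ he]
        gcongr
        rcases max_choice x y with h | h <;> rw [h]
        exacts [le_self_add, le_add_self]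

theorem ENNReal.rpow_sum_mul_le {ι : Type*} (s : Finset ι) (w x : ι → ℝ≥0∞) {t : ℝ}
    (ht : 0 < t) : (∑ i ∈ s, w i * x i) ^ t ≤ (∑ i ∈ s, w i) ^ t * ∑ i ∈ s, x i ^ t := by
  have hx : ∀ i ∈ s, x i ≤ (∑ i ∈ s, x i ^ t) ^ t⁻¹ := fun i hi => by
    rw [← ENNReal.rpow_rpow_inv ht.ne' (x i)]
    gcongr
    exact single_le_sum (f := fun i => x i ^ t) (fun _ _ => zero_le) hi
  calc (∑ i ∈ s, w i * x i) ^ t ≤ ((∑ i ∈ s, w i) * (∑ i ∈ s, x i ^ t) ^ t⁻¹) ^ t := by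
        rw [sum_mul]
        gcongr with i hi
        exact hx i hi
    _ = (∑ i ∈ s, w i) ^ t * ∑ i ∈ s, x i ^ t := by
        rw [ENNReal.mul_rpow_of_nonneg _ _ ht.le, ENNReal.rpow_inv_rpow ht.ne']

theorem ENNReal.tsum_mul_tsum_eq_tsum_sum_range (u v : ℕ → ℝ≥0∞) :
    (∑' n, u n) * ∑' n, v n = ∑' n, ∑ k ∈ range (n + 1), u k * v (n - k) := by
  simp_rw [← Nat.sum_antidiagonal_eq_sum_range_succ fun k l => u k * v l, ← ENNReal.tsum_mul_right,
    ← ENNReal.tsum_mul_left]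
  rw [← ENNReal.tsum_prod, ← HasAntidiagonal.sigmaAntidiagonalEquivProd.tsum_eq,
    ENNReal.tsum_sigma']
  congr 1 with n
  rw [← Finset.tsum_subtype]
  rfl

section SequenceNorm

variable {q : ℝ≥0∞}

theorem lqNat_of_ne_top (hqi : q ≠ ∞) (a : ℕ → ℝ≥0∞) :
    lqNat q a = (∑' k, a k ^ q.toReal) ^ q.toReal⁻¹ := by
  rw [lqNat, if_neg hqi, one_div]

theorem lqNat_mono (q : ℝ≥0∞) {a b : ℕ → ℝ≥0∞} (hab : ∀ k, a k ≤ b k) :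
    lqNat q a ≤ lqNat q b := by
  unfold lqNat
  split_ifs
  · exact iSup_mono hab
  · gcongr with k
    exact hab k

theorem le_lqNat (hq : q ≠ 0) (a : ℕ → ℝ≥0∞) (k : ℕ) : a k ≤ lqNat q a := by
  by_cases hqi : q = ∞
  · rw [lqNat, if_pos hqi]
    exact le_iSup a k
  · have ht : q.toReal ≠ 0 := (ENNReal.toReal_pos hq hqi).ne'
    rw [lqNat_of_ne_top hqi, ← ENNReal.rpow_rpow_inv ht (a k)]
    gcongr
    exact ENNReal.le_tsum k

theorem lqNat_top_le (hq : q ≠ 0) (a : ℕ → ℝ≥0∞) : lqNat ∞ a ≤ lqNat q a := by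
  rw [lqNat, if_pos rfl]
  exact iSup_le (le_lqNat hq a)

theorem lqNat_const_mul (hq : q ≠ 0) (c : ℝ≥0∞) (a : ℕ → ℝ≥0∞) :
    lqNat q (fun k => c * a k) = c * lqNat q a := by
  by_cases hqi : q = ∞
  · simp only [lqNat, if_pos hqi, ENNReal.mul_iSup]
  · have ht : 0 < q.toReal := ENNReal.toReal_pos hq hqi
    simp only [lqNat_of_ne_top hqi, ENNReal.mul_rpow_of_nonneg _ _ ht.le,
      ENNReal.tsum_mul_left, ENNReal.mul_rpow_of_nonneg _ _ (inv_nonneg.mpr ht.le),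
      ENNReal.rpow_rpow_inv ht.ne']

theorem lqNat_zero (hq : q ≠ 0) : lqNat q (fun _ => 0) = 0 := by
  simpa using lqNat_const_mul hq 0 fun _ => 0

theorem lqNat_mul_le_iSup_mul (hq : q ≠ 0) (u v : ℕ → ℝ≥0∞) :
    lqNat q (fun k => u k * v k) ≤ (⨆ k, u k) * lqNat q v :=
  (lqNat_mono q fun k => mul_le_mul_left (le_iSup u k) (v k)).trans_eq (lqNat_const_mul hq _ v)

noncomputable def lqNatConst (q : ℝ≥0∞) : ℝ≥0∞ := 2 * 2 ^ q.toReal⁻¹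

theorem one_le_lqNatConst (q : ℝ≥0∞) : 1 ≤ lqNatConst q := by
  have : (1 : ℝ≥0∞) ≤ 2 ^ q.toReal⁻¹ := by
    simpa using ENNReal.rpow_le_rpow_of_exponent_le one_le_two (inv_nonneg.mpr toReal_nonneg)
  exact one_le_two.trans (le_mul_of_one_le_right' this)

theorem lqNatConst_ne_top (q : ℝ≥0∞) : lqNatConst q ≠ ∞ :=
  ENNReal.mul_ne_top ofNat_ne_top (ENNReal.rpow_ne_top_of_nonneg (by positivity) ofNat_ne_top)

theorem lqNat_add_le (hq : q ≠ 0) (a b : ℕ → ℝ≥0∞) :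
    lqNat q (a + b) ≤ lqNatConst q * (lqNat q a + lqNat q b) := by
  by_cases hqi : q = ∞
  · simp only [lqNat, if_pos hqi]
    exact (iSup_le fun k => add_le_add (le_iSup a k) (le_iSup b k)).trans
      (le_mul_of_one_le_left' (one_le_lqNatConst q))
  · have ht : 0 < q.toReal := ENNReal.toReal_pos hq hqi
    simp only [lqNat_of_ne_top hqi]
    calc (∑' k, (a + b) k ^ q.toReal) ^ q.toReal⁻¹
        ≤ (2 ^ q.toReal * ((∑' k, a k ^ q.toReal) + ∑' k, b k ^ q.toReal)) ^ q.toReal⁻¹ := by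
          rw [← ENNReal.tsum_add, ← ENNReal.tsum_mul_left]
          gcongr with k
          exact ENNReal.rpow_add_le_two_rpow_mul_rpow_add_rpow _ _ ht.le
      _ = 2 * ((∑' k, a k ^ q.toReal) + ∑' k, b k ^ q.toReal) ^ q.toReal⁻¹ := by
          rw [ENNReal.mul_rpow_of_nonneg _ _ (by positivity), ENNReal.rpow_rpow_inv ht.ne']
      _ ≤ 2 * (2 ^ q.toReal⁻¹ * ((∑' k, a k ^ q.toReal) ^ q.toReal⁻¹
            + (∑' k, b k ^ q.toReal) ^ q.toReal⁻¹)) := by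
          gcongr
          exact ENNReal.rpow_add_le_two_rpow_mul_rpow_add_rpow _ _ (by positivity)
      _ = _ := by rw [lqNatConst]; ring

theorem lqNat_sum_le (hq : q ≠ 0) (n : ℕ) (F : ℕ → ℕ → ℝ≥0∞) :
    lqNat q (fun k => ∑ j ∈ range n, F j k)
      ≤ lqNatConst q ^ n * ∑ j ∈ range n, lqNat q (F j) := by
  set K := lqNatConst q
  induction n with
  | zero => simp [lqNat_zero hq]
  | succ n ih =>
    simp only [sum_range_succ]
    calc lqNat q (fun k => ∑ j ∈ range n, F j k + F n k)
        ≤ K * (lqNat q (fun k => ∑ j ∈ range n, F j k) + lqNat q (F n)) := lqNat_add_le hq _ _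
      _ ≤ K * (K ^ n * ∑ j ∈ range n, lqNat q (F j) + K ^ n * lqNat q (F n)) := by
          gcongr
          exact le_mul_of_one_le_left' (one_le_pow₀ (one_le_lqNatConst q))
      _ = K ^ (n + 1) * (∑ j ∈ range n, lqNat q (F j) + lqNat q (F n)) := by ring

theorem lqNat_geom_lt_top (hq : q ≠ 0) {θ : ℝ≥0∞} (hθ : θ < 1) :
    lqNat q (fun k => θ ^ k) < ∞ := by
  by_cases hqi : q = ∞
  · rw [lqNat, if_pos hqi]
    exact (iSup_le fun k => pow_le_one₀ zero_le hθ.le).trans_lt one_lt_top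
  · have ht : 0 < q.toReal := ENNReal.toReal_pos hq hqi
    have hθt : θ ^ q.toReal < 1 := ENNReal.rpow_lt_one hθ ht
    simp only [lqNat_of_ne_top hqi, ← ENNReal.rpow_natCast, ← ENNReal.rpow_mul, mul_comm _ q.toReal]
    simp only [ENNReal.rpow_mul, ENNReal.rpow_natCast, ENNReal.tsum_geometric]
    exact ENNReal.rpow_lt_top_of_nonneg (by positivity)
      (ENNReal.inv_ne_top.mpr (tsub_pos_of_lt hθt).ne')

theorem lqNat_top_sum_geom_mul_le (θ : ℝ≥0∞) (B : ℕ → ℝ≥0∞) :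
    lqNat ∞ (fun k => ∑ i ∈ range (k + 1), θ ^ i * B (k - i)) ≤ (∑' i, θ ^ i) * lqNat ∞ B := by
  simp only [lqNat, if_true]
  refine iSup_le fun k => ?_
  calc ∑ i ∈ range (k + 1), θ ^ i * B (k - i) ≤ ∑ i ∈ range (k + 1), θ ^ i * ⨆ n, B n := by
        gcongr with i
        exact le_iSup B _
    _ ≤ (∑' i, θ ^ i) * ⨆ n, B n := by
        rw [← sum_mul]
        gcongr
        exact ENNReal.sum_le_tsum _

theorem lqNat_sum_geom_mul_le (hq : q ≠ 0) {θ : ℝ≥0∞} (hθ : θ < 1) :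
    ∃ C : ℝ≥0∞, C ≠ ∞ ∧ ∀ B : ℕ → ℝ≥0∞,
      lqNat q (fun k => ∑ i ∈ range (k + 1), θ ^ i * B (k - i)) ≤ C * lqNat q B := by
  by_cases hqi : q = ∞
  · subst hqi
    exact ⟨∑' i, θ ^ i, by simpa [ENNReal.tsum_geometric] using (tsub_pos_of_lt hθ).ne',
      lqNat_top_sum_geom_mul_le θ⟩
  set t := q.toReal
  have ht : 0 < t := ENNReal.toReal_pos hq hqi
  -- split `θ^i = η^i η^i` with `η = √θ`: one factor is summed, the other is absorbed into `ℓ_t`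
  set η : ℝ≥0∞ := θ ^ (2⁻¹ : ℝ)
  have hηθ : ∀ i : ℕ, θ ^ i = η ^ i * η ^ i := fun i => by
    rw [← mul_pow, ← ENNReal.rpow_add_of_nonneg _ _ (by norm_num) (by norm_num)]
    norm_num
  have hη : η < 1 := ENNReal.rpow_lt_one hθ (by norm_num)
  have hηt : η ^ t < 1 := ENNReal.rpow_lt_one hη ht
  set S := ∑' i, η ^ i
  set R := ∑' i, (η ^ t) ^ i
  have hS : S ≠ ∞ := by simpa [S, ENNReal.tsum_geometric] using (tsub_pos_of_lt hη).ne'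
  have hR : R ≠ ∞ := by simpa [R, ENNReal.tsum_geometric] using (tsub_pos_of_lt hηt).ne'
  refine ⟨S * R ^ t⁻¹, ENNReal.mul_ne_top hS (ENNReal.rpow_ne_top_of_nonneg (by positivity) hR),
    fun B => ?_⟩
  have hpoint : ∀ k, (∑ i ∈ range (k + 1), θ ^ i * B (k - i)) ^ t
      ≤ S ^ t * ∑ i ∈ range (k + 1), (η ^ t) ^ i * B (k - i) ^ t := fun k =>
    calc (∑ i ∈ range (k + 1), θ ^ i * B (k - i)) ^ t
        = (∑ i ∈ range (k + 1), η ^ i * (η ^ i * B (k - i))) ^ t := by simp only [hηθ, mul_assoc]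
      _ ≤ (∑ i ∈ range (k + 1), η ^ i) ^ t * ∑ i ∈ range (k + 1), (η ^ i * B (k - i)) ^ t :=
          ENNReal.rpow_sum_mul_le _ _ _ ht
      _ = (∑ i ∈ range (k + 1), η ^ i) ^ t * ∑ i ∈ range (k + 1), (η ^ t) ^ i * B (k - i) ^ t := by
          congr 1
          simp only [ENNReal.mul_rpow_of_nonneg _ _ ht.le, ← ENNReal.rpow_natCast,
            ← ENNReal.rpow_mul, mul_comm t]
      _ ≤ S ^ t * ∑ i ∈ range (k + 1), (η ^ t) ^ i * B (k - i) ^ t := by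
          gcongr
          exact ENNReal.sum_le_tsum _
  simp only [lqNat_of_ne_top hqi]
  calc (∑' k, (∑ i ∈ range (k + 1), θ ^ i * B (k - i)) ^ t) ^ t⁻¹
      ≤ (S ^ t * (R * ∑' n, B n ^ t)) ^ t⁻¹ := by
        rw [ENNReal.tsum_mul_tsum_eq_tsum_sum_range, ← ENNReal.tsum_mul_left]
        gcongr with k
        exact hpoint k
    _ = S * R ^ t⁻¹ * (∑' n, B n ^ t) ^ t⁻¹ := by
        rw [ENNReal.mul_rpow_of_nonneg _ _ (by positivity),
          ENNReal.mul_rpow_of_nonneg _ _ (by positivity), ENNReal.rpow_rpow_inv ht.ne', mul_assoc]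

theorem le_pow_mul_add_sum_of_le_mul_add {θ c : ℝ≥0∞} {A B : ℕ → ℝ≥0∞}
    (hAB : ∀ k, A (k + 1) ≤ θ * A k + c * B (k + 1)) (k : ℕ) :
    A k ≤ θ ^ k * A 0 + c * ∑ i ∈ range (k + 1), θ ^ i * B (k - i) := by
  induction k with
  | zero => simp
  | succ k ih =>
    calc A (k + 1) ≤ θ * A k + c * B (k + 1) := hAB k
      _ ≤ θ * (θ ^ k * A 0 + c * ∑ i ∈ range (k + 1), θ ^ i * B (k - i)) + c * B (k + 1) := by
          gcongr
      _ = θ ^ (k + 1) * A 0 + c * ∑ i ∈ range (k + 2), θ ^ i * B (k + 1 - i) := by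
          rw [sum_range_succ' _ (k + 1)]
          simp only [Nat.add_sub_add_right, Nat.sub_zero, pow_zero, one_mul, pow_succ',
            mul_assoc, ← mul_sum]
          ring

theorem lqNat_le_of_le_mul_add (hq : q ≠ 0) {θ c : ℝ≥0∞} (hθ : θ < 1) (hc : c ≠ ∞) :
    ∃ K : ℝ≥0∞, K ≠ ∞ ∧ ∀ A B : ℕ → ℝ≥0∞, (∀ k, A (k + 1) ≤ θ * A k + c * B (k + 1)) →
      lqNat q A ≤ K * (A 0 + lqNat q B) := by
  obtain ⟨C, hC, hHardy⟩ := lqNat_sum_geom_mul_le hq hθ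
  set G := lqNat q fun k => θ ^ k
  have hG : G ≠ ∞ := (lqNat_geom_lt_top hq hθ).ne
  refine ⟨lqNatConst q * (G + c * C), ENNReal.mul_ne_top (lqNatConst_ne_top q)
    (ENNReal.add_ne_top.mpr ⟨hG, ENNReal.mul_ne_top hc hC⟩), fun A B hAB => ?_⟩
  calc lqNat q A
      ≤ lqNat q ((fun k => θ ^ k * A 0) + fun k => c * ∑ i ∈ range (k + 1), θ ^ i * B (k - i)) :=
        lqNat_mono q (le_pow_mul_add_sum_of_le_mul_add hAB)
    _ ≤ lqNatConst q * (A 0 * G + c * (C * lqNat q B)) := by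
        refine (lqNat_add_le hq _ _).trans ?_
        simp only [mul_comm _ (A 0), lqNat_const_mul hq]
        gcongr
        exact hHardy B
    _ ≤ lqNatConst q * ((G + c * C) * (A 0 + lqNat q B)) := by
        gcongr
        calc A 0 * G + c * (C * lqNat q B) ≤ A 0 * (G + c * C) + (G + c * C) * lqNat q B := by
              rw [← mul_assoc]
              gcongr
              exacts [le_self_add, le_add_self]
          _ = (G + c * C) * (A 0 + lqNat q B) := by ring
    _ = lqNatConst q * (G + c * C) * (A 0 + lqNat q B) := (mul_assoc _ _ _).symm

end SequenceNorm

section Modulus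

variable {d : ℕ} {m : ℕ} {p : ℝ≥0∞} {f g : Euc d → ℂ} {t : ℝ}

theorem fdiff_eq_iterate (h : Euc d) (m : ℕ) (f : Euc d → ℂ) : fdiff h m f = (Δ_[h])^[m] f := by
  ext x
  rw [fdiff, fwdDiff_iter_eq_sum_shift]
  refine sum_congr rfl fun ℓ _ => ?_
  rw [zsmul_eq_mul, Nat.cast_smul_eq_nsmul ℝ]
  push_cast
  ring

theorem omegaMod_le {A : ℝ≥0∞}
    (H : ∀ h : Euc d, ‖h‖ < t → eLpNorm ((Δ_[h])^[m] f) p volume ≤ A) : omegaMod m p f t ≤ A :=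
  iSup₂_le fun h hh => fdiff_eq_iterate h m f ▸ H h hh

theorem eLpNorm_le_omegaMod {h : Euc d} (hh : ‖h‖ < t) :
    eLpNorm ((Δ_[h])^[m] f) p volume ≤ omegaMod m p f t :=
  fdiff_eq_iterate h m f ▸ le_iSup₂ (f := fun (h : Euc d) (_ : ‖h‖ < t) =>
    eLpNorm (fdiff h m f) p volume) h hh

theorem omegaMod_zero (f : Euc d → ℂ) (ht : 0 < t) : omegaMod 0 p f t = eLpNorm f p volume :=
  le_antisymm (omegaMod_le fun _ _ => le_rfl)
    (eLpNorm_le_omegaMod (m := 0) (h := 0) (by simpa using ht))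

theorem omegaMod_le_two_pow (hf : AEStronglyMeasurable f volume) (hp : 1 ≤ p) (m : ℕ) (t : ℝ) :
    omegaMod m p f t ≤ 2 ^ m * eLpNorm f p volume :=
  omegaMod_le fun h _ => eLpNorm_fwdDiff_iter_le hf hp h m

theorem omegaMod_const (hm : 0 < m) (c : ℂ) (t : ℝ) : omegaMod m p (fun _ : Euc d => c) t = 0 := by
  refine le_antisymm (omegaMod_le fun h _ => ?_) zero_le
  obtain ⟨n, rfl⟩ := Nat.exists_eq_add_of_lt hm
  rw [Nat.zero_add, Function.iterate_succ_apply, fwdDiff_const,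
    Function.iterate_fixed (fwdDiff_const h 0), eLpNorm_zero']

theorem two_pow_mul_omegaMod_le (hf : AEStronglyMeasurable f volume) (hp : 1 ≤ p) (j : ℕ)
    (t : ℝ) : 2 ^ j * omegaMod j p f t
      ≤ omegaMod j p f (2 * t) + j * 2 ^ j * omegaMod (j + 1) p f t := by
  rw [omegaMod, ENNReal.mul_iSup]
  refine iSup_le fun h => ?_
  rw [ENNReal.mul_iSup]
  refine iSup_le fun hh => ?_
  have h2h : ‖h + h‖ < 2 * t := (norm_add_le h h).trans_lt (by linarith)
  rw [fdiff_eq_iterate]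
  refine (two_pow_mul_eLpNorm_fwdDiff_iter_le hf hp h j).trans ?_
  gcongr
  exacts [eLpNorm_le_omegaMod h2h, eLpNorm_le_omegaMod hh]

theorem omegaMod_mul_le (hf : AEStronglyMeasurable f volume) (hg : AEStronglyMeasurable g volume)
    (m : ℕ) (t : ℝ) : omegaMod m ∞ (fun x => f x * g x) t
      ≤ ∑ j ∈ range (m + 1), m.choose j * (omegaMod j ∞ f t * omegaMod (m - j) ∞ g t) := by
  refine omegaMod_le fun h hh => ?_
  set T : ℕ → Euc d → ℂ := fun j => (Δ_[h])^[j] f • fun x => (Δ_[h])^[m - j] g (x + j • h)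
  have hT : ∀ j, AEStronglyMeasurable (T j) volume := fun j =>
    (hf.fwdDiff_iter h j).smul ((hg.fwdDiff_iter h (m - j)).comp_add_right _)
  have hLeibniz : (Δ_[h])^[m] (fun x => f x * g x) = ∑ j ∈ range (m + 1), m.choose j • T j := by
    ext x
    simp only [Finset.sum_apply, smul_eq_mul, nsmul_eq_mul, T]
    exact fwdDiff_iter_mul h m f g x
  rw [hLeibniz]
  refine (eLpNorm_sum_le (fun j _ => (hT j).const_smul _) le_top).trans (sum_le_sum fun j _ => ?_)
  rw [eLpNorm_nsmul]
  gcongr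
  calc eLpNorm (T j) ∞ volume
      ≤ eLpNorm ((Δ_[h])^[j] f) ∞ volume
          * eLpNorm (fun x => (Δ_[h])^[m - j] g (x + j • h)) ∞ volume :=
        eLpNorm_smul_le_eLpNorm_top_mul_eLpNorm ∞ ((hg.fwdDiff_iter h (m - j)).comp_add_right _) _
    _ ≤ omegaMod j ∞ f t * omegaMod (m - j) ∞ g t := by
        rw [eLpNorm_comp_add_right (hg.fwdDiff_iter h (m - j))]
        gcongr
        exacts [eLpNorm_le_omegaMod hh, eLpNorm_le_omegaMod hh]

end Modulus

section BesovSequence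

variable {d : ℕ} {p q : ℝ≥0∞} {f g : Euc d → ℂ}

noncomputable def besovSeq (s : ℝ) (m : ℕ) (p : ℝ≥0∞) (f : Euc d → ℂ) (k : ℕ) : ℝ≥0∞ :=
  2 ^ ((k : ℝ) * s) * omegaMod m p f (2 ^ (-(k : ℝ)))

theorem besovNorm_eq (s : ℝ) (p q : ℝ≥0∞) (m : ℕ) (f : Euc d → ℂ) :
    besovNorm d s p q m f = eLpNorm f p volume + lqNat q (besovSeq s m p f) := rfl

theorem besovSeq_le_of_le {α s : ℝ} (hαs : α ≤ s) (m : ℕ) (k : ℕ) :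
    besovSeq α m p f k ≤ besovSeq s m p f k := by
  unfold besovSeq
  gcongr
  exact one_le_two

theorem besovSeq_succ_le (hf : AEStronglyMeasurable f volume) (hp : 1 ≤ p) (α : ℝ) (i k : ℕ) :
    besovSeq α i p f (k + 1)
      ≤ 2 ^ (α - i) * besovSeq α i p f k + i * besovSeq α (i + 1) p f (k + 1) := by
  have htwice : (2 : ℝ) * 2 ^ (-((k + 1 : ℕ) : ℝ)) = 2 ^ (-(k : ℝ)) := by
    rw [show -(k : ℝ) = 1 + -((k + 1 : ℕ) : ℝ) by push_cast; ring, Real.rpow_add two_pos,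
      Real.rpow_one]
  have hsplit : (2 : ℝ≥0∞) ^ (((k + 1 : ℕ) : ℝ) * α) = 2 ^ (α - i) * 2 ^ ((k : ℝ) * α) * 2 ^ i := by
    rw [← ENNReal.rpow_natCast, ← ENNReal.rpow_add _ _ two_ne_zero ofNat_ne_top,
      ← ENNReal.rpow_add _ _ two_ne_zero ofNat_ne_top]
    push_cast
    ring_nf
  have hMarchaud := two_pow_mul_omegaMod_le hf hp i (2 ^ (-((k + 1 : ℕ) : ℝ)))
  rw [htwice] at hMarchaud
  calc besovSeq α i p f (k + 1)
      = 2 ^ (α - i) * 2 ^ ((k : ℝ) * α) * (2 ^ i * omegaMod i p f (2 ^ (-((k + 1 : ℕ) : ℝ)))) := by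
        rw [besovSeq, hsplit]
        ring
    _ ≤ 2 ^ (α - i) * 2 ^ ((k : ℝ) * α) * (omegaMod i p f (2 ^ (-(k : ℝ)))
          + i * 2 ^ i * omegaMod (i + 1) p f (2 ^ (-((k + 1 : ℕ) : ℝ)))) := by
        gcongr
    _ = 2 ^ (α - i) * besovSeq α i p f k + i * besovSeq α (i + 1) p f (k + 1) := by
        rw [besovSeq, besovSeq, hsplit]
        ring

theorem lqNat_besovSeq_le_succ (hq : q ≠ 0) (hp : 1 ≤ p) {α : ℝ} {i : ℕ} (hαi : α < i) :
    ∃ K : ℝ≥0∞, K ≠ ∞ ∧ ∀ f : Euc d → ℂ, AEStronglyMeasurable f volume →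
      lqNat q (besovSeq α i p f) ≤ K * (eLpNorm f p volume + lqNat q (besovSeq α (i + 1) p f)) := by
  have hθ : (2 : ℝ≥0∞) ^ (α - i) < 1 :=
    ENNReal.rpow_lt_one_of_one_lt_of_neg one_lt_two (by linarith)
  obtain ⟨K, hK, hrec⟩ := lqNat_le_of_le_mul_add hq hθ (natCast_ne_top i)
  refine ⟨K * 2 ^ i, ENNReal.mul_ne_top hK (ENNReal.pow_ne_top ofNat_ne_top), fun f hf => ?_⟩
  have h0 : besovSeq α i p f 0 ≤ 2 ^ i * eLpNorm f p volume := by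
    simpa [besovSeq] using omegaMod_le_two_pow hf hp i 1
  calc lqNat q (besovSeq α i p f)
      ≤ K * (besovSeq α i p f 0 + lqNat q (besovSeq α (i + 1) p f)) :=
        hrec _ _ (besovSeq_succ_le hf hp α i)
    _ ≤ K * (2 ^ i * (eLpNorm f p volume + lqNat q (besovSeq α (i + 1) p f))) := by
        gcongr K * ?_
        rw [mul_add]
        exact add_le_add h0 (le_mul_of_one_le_left' (one_le_pow₀ one_le_two))
    _ = K * 2 ^ i * (eLpNorm f p volume + lqNat q (besovSeq α (i + 1) p f)) :=
        (mul_assoc _ _ _).symm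

theorem lqNat_besovSeq_le (hq : q ≠ 0) (hp : 1 ≤ p) {α s : ℝ} (hαs : α ≤ s) {i m : ℕ}
    (hαi : α < i) (him : i ≤ m) :
    ∃ K : ℝ≥0∞, K ≠ ∞ ∧ ∀ f : Euc d → ℂ, AEStronglyMeasurable f volume →
      lqNat q (besovSeq α i p f) ≤ K * besovNorm d s p q m f := by
  obtain ⟨n, hn⟩ := Nat.exists_eq_add_of_le him
  induction n generalizing i with
  | zero =>
    refine ⟨1, one_ne_top, fun f _ => ?_⟩
    rw [one_mul, besovNorm_eq, hn]
    exact (lqNat_mono q fun k => besovSeq_le_of_le hαs _ k).trans le_add_self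
  | succ n ih =>
    obtain ⟨K₁, hK₁, h₁⟩ := lqNat_besovSeq_le_succ (d := d) hq hp hαi
    obtain ⟨K₂, hK₂, h₂⟩ := ih (i := i + 1) (by push_cast; linarith) (by omega) (by omega)
    refine ⟨K₁ * (1 + K₂), ENNReal.mul_ne_top hK₁ (ENNReal.add_ne_top.mpr ⟨one_ne_top, hK₂⟩),
      fun f hf => ?_⟩
    calc lqNat q (besovSeq α i p f)
        ≤ K₁ * (eLpNorm f p volume + lqNat q (besovSeq α (i + 1) p f)) := h₁ f hf
      _ ≤ K₁ * (besovNorm d s p q m f + K₂ * besovNorm d s p q m f) := by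
          gcongr
          exacts [le_self_add, h₂ f hf]
      _ = K₁ * (1 + K₂) * besovNorm d s p q m f := by ring

theorem iSup_besovSeq_le (hq : q ≠ 0) {α s : ℝ} (hαs : α ≤ s) {i m : ℕ} (hαi : α < i)
    (him : i ≤ m) : ∃ K : ℝ≥0∞, K ≠ ∞ ∧ ∀ f : Euc d → ℂ, AEStronglyMeasurable f volume →
      ⨆ k, besovSeq α i ∞ f k ≤ K * besovNorm d s ∞ q m f := by
  obtain ⟨K, hK, hbound⟩ := lqNat_besovSeq_le (d := d) top_ne_zero le_top hαs hαi him
  refine ⟨K, hK, fun f hf => ?_⟩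
  have := hbound f hf
  rw [lqNat, if_pos rfl] at this
  refine this.trans ?_
  rw [besovNorm_eq, besovNorm_eq]
  gcongr
  exact lqNat_top_le hq _

end BesovSequence

section Algebra

variable {d : ℕ} {q : ℝ≥0∞} {s : ℝ} {m : ℕ}

theorem lqNat_omegaMod_zero_mul_le (hq : q ≠ 0) (f g : Euc d → ℂ) :
    lqNat q (fun k => 2 ^ ((k : ℝ) * s)
        * (omegaMod 0 ∞ f (2 ^ (-(k : ℝ))) * omegaMod m ∞ g (2 ^ (-(k : ℝ)))))
      ≤ besovNorm d s ∞ q m f * besovNorm d s ∞ q m g :=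
  calc _ = eLpNorm f ∞ volume * lqNat q (besovSeq s m ∞ g) := by
        rw [← lqNat_const_mul hq]
        simp only [omegaMod_zero f (Real.rpow_pos_of_pos two_pos _), besovSeq]
        congr with k
        ring
    _ ≤ besovNorm d s ∞ q m f * besovNorm d s ∞ q m g := by
        rw [besovNorm_eq, besovNorm_eq]
        exact mul_le_mul' le_self_add le_add_self

theorem mul_div_lt_self_and_le {s j m : ℝ} (hs : 0 ≤ s) (hsm : s < m) (hj : 0 < j) (hjm : j ≤ m) :
    s * j / m < j ∧ s * j / m ≤ s := by
  rw [div_lt_iff₀ (hj.trans_le hjm), div_le_iff₀ (hj.trans_le hjm)]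
  constructor <;> nlinarith

theorem lqNat_omegaMod_mul_le_of_lt (hq : q ≠ 0) (hs : 0 ≤ s) (hsm : s < m) {j : ℕ} (hj : 0 < j)
    (hjm : j < m) : ∃ K : ℝ≥0∞, K ≠ ∞ ∧ ∀ f g : Euc d → ℂ, AEStronglyMeasurable f volume →
      AEStronglyMeasurable g volume →
      lqNat q (fun k => 2 ^ ((k : ℝ) * s)
          * (omegaMod j ∞ f (2 ^ (-(k : ℝ))) * omegaMod (m - j) ∞ g (2 ^ (-(k : ℝ)))))
        ≤ K * (besovNorm d s ∞ q m f * besovNorm d s ∞ q m g) := by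
  -- `s = α + β` with `α < j`, `β < m - j`: the `f` factor goes into `ℓ_∞`, the `g` one into `ℓ_q`
  set α := s * j / m
  set β := s * (m - j : ℕ) / m
  have hαβ : α + β = s := by
    have hm : (m : ℝ) ≠ 0 := Nat.cast_ne_zero.mpr (hj.trans hjm).ne'
    simp only [α, β, Nat.cast_sub hjm.le]
    field_simp
    ring
  obtain ⟨hαj, hαs⟩ := mul_div_lt_self_and_le hs hsm (Nat.cast_pos.mpr hj)
    (Nat.cast_le.mpr hjm.le)
  obtain ⟨hβj, hβs⟩ := mul_div_lt_self_and_le hs hsm (Nat.cast_pos.mpr (Nat.sub_pos_of_lt hjm))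
    (Nat.cast_le.mpr (Nat.sub_le m j))
  obtain ⟨K₁, hK₁, h₁⟩ := iSup_besovSeq_le (d := d) hq hαs hαj hjm.le
  obtain ⟨K₂, hK₂, h₂⟩ := lqNat_besovSeq_le (d := d) hq le_top hβs hβj (Nat.sub_le m j)
  refine ⟨K₁ * K₂, ENNReal.mul_ne_top hK₁ hK₂, fun f g hf hg => ?_⟩
  have hsplit : ∀ k : ℕ, 2 ^ ((k : ℝ) * s)
      * (omegaMod j ∞ f (2 ^ (-(k : ℝ))) * omegaMod (m - j) ∞ g (2 ^ (-(k : ℝ))))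
      = besovSeq α j ∞ f k * besovSeq β (m - j) ∞ g k := fun k => by
    rw [besovSeq, besovSeq, ← hαβ, mul_add, ENNReal.rpow_add _ _ two_ne_zero ofNat_ne_top]
    ring
  simp only [hsplit]
  calc _ ≤ (⨆ k, besovSeq α j ∞ f k) * lqNat q (besovSeq β (m - j) ∞ g) :=
        lqNat_mul_le_iSup_mul hq _ _
    _ ≤ K₁ * besovNorm d s ∞ q m f * (K₂ * besovNorm d s ∞ q m g) := by
        gcongr
        exacts [h₁ f hf, h₂ g hg]
    _ = K₁ * K₂ * (besovNorm d s ∞ q m f * besovNorm d s ∞ q m g) := by ring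

theorem lqNat_omegaMod_mul_le (hq : q ≠ 0) (hs : 0 ≤ s) (hsm : s < m) {j : ℕ} (hj : j ≤ m) :
    ∃ K : ℝ≥0∞, K ≠ ∞ ∧ ∀ f g : Euc d → ℂ, AEStronglyMeasurable f volume →
      AEStronglyMeasurable g volume →
      lqNat q (fun k => 2 ^ ((k : ℝ) * s)
          * (omegaMod j ∞ f (2 ^ (-(k : ℝ))) * omegaMod (m - j) ∞ g (2 ^ (-(k : ℝ)))))
        ≤ K * (besovNorm d s ∞ q m f * besovNorm d s ∞ q m g) := by
  rcases Nat.eq_zero_or_pos j with rfl | hj₀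
  · exact ⟨1, one_ne_top, fun f g _ _ => by simpa using lqNat_omegaMod_zero_mul_le hq f g⟩
  rcases hj.eq_or_lt with rfl | hjm
  · refine ⟨1, one_ne_top, fun f g _ _ => ?_⟩
    simpa only [Nat.sub_self, mul_comm (omegaMod j ∞ f _), one_mul,
      mul_comm (besovNorm d s ∞ q j f)] using lqNat_omegaMod_zero_mul_le hq g f
  exact lqNat_omegaMod_mul_le_of_lt hq hs hsm hj₀ hjm

theorem lqNat_besovSeq_mul_le (hq : q ≠ 0) {f g : Euc d → ℂ} (hf : AEStronglyMeasurable f volume)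
    (hg : AEStronglyMeasurable g volume) :
    lqNat q (besovSeq s m ∞ fun x => f x * g x) ≤ lqNatConst q ^ (m + 1) * ∑ j ∈ range (m + 1),
      m.choose j * lqNat q (fun k => 2 ^ ((k : ℝ) * s)
        * (omegaMod j ∞ f (2 ^ (-(k : ℝ))) * omegaMod (m - j) ∞ g (2 ^ (-(k : ℝ))))) := by
  simp only [← lqNat_const_mul hq]
  refine (lqNat_mono q fun k => ?_).trans (lqNat_sum_le hq (m + 1) _)
  simp only [besovSeq, mul_left_comm _ (2 ^ ((k : ℝ) * s) : ℝ≥0∞), ← mul_sum]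
  gcongr
  exact omegaMod_mul_le hf hg m _

theorem besovNorm_mul_le (hq : q ≠ 0) (hs : 0 ≤ s) (hsm : s < m) :
    ∃ K : ℝ≥0∞, K ≠ ∞ ∧ ∀ f g : Euc d → ℂ, AEStronglyMeasurable f volume →
      AEStronglyMeasurable g volume →
      besovNorm d s ∞ q m (fun x => f x * g x)
        ≤ K * (besovNorm d s ∞ q m f * besovNorm d s ∞ q m g) := by
  have hterm : ∀ j, ∃ K : ℝ≥0∞, K ≠ ∞ ∧ (j ≤ m → ∀ f g : Euc d → ℂ,
      AEStronglyMeasurable f volume → AEStronglyMeasurable g volume →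
      lqNat q (fun k => 2 ^ ((k : ℝ) * s)
          * (omegaMod j ∞ f (2 ^ (-(k : ℝ))) * omegaMod (m - j) ∞ g (2 ^ (-(k : ℝ)))))
        ≤ K * (besovNorm d s ∞ q m f * besovNorm d s ∞ q m g)) := fun j => by
    by_cases hj : j ≤ m
    · obtain ⟨K, hK, h⟩ := lqNat_omegaMod_mul_le (d := d) hq hs hsm hj
      exact ⟨K, hK, fun _ => h⟩
    · exact ⟨0, zero_ne_top, fun h => absurd h hj⟩
  choose K hK hbound using hterm
  set L := lqNatConst q ^ (m + 1) * ∑ j ∈ range (m + 1), m.choose j * K j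
  have hL : L ≠ ∞ := ENNReal.mul_ne_top (ENNReal.pow_ne_top (lqNatConst_ne_top q))
    (ENNReal.sum_ne_top.mpr fun j _ => ENNReal.mul_ne_top (natCast_ne_top _) (hK j))
  refine ⟨1 + L, ENNReal.add_ne_top.mpr ⟨one_ne_top, hL⟩, fun f g hf hg => ?_⟩
  set P := besovNorm d s ∞ q m f * besovNorm d s ∞ q m g
  have hsup : eLpNorm (fun x => f x * g x) ∞ volume ≤ P :=
    (eLpNorm_smul_le_eLpNorm_top_mul_eLpNorm ∞ hg f).trans (mul_le_mul' le_self_add le_self_add)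
  have hseq : lqNat q (besovSeq s m ∞ fun x => f x * g x) ≤ L * P := by
    refine (lqNat_besovSeq_mul_le hq hf hg).trans ?_
    simp only [L, mul_assoc, sum_mul]
    gcongr with j hj
    exact hbound j (mem_range_succ_iff.mp hj) f g hf hg
  calc besovNorm d s ∞ q m (fun x => f x * g x) ≤ P + L * P := by
        rw [besovNorm_eq]
        exact add_le_add hsup hseq
    _ = (1 + L) * P := by ring

theorem besovNorm_one (hq : q ≠ 0) (hm : 0 < m) (s : ℝ) :
    besovNorm d s ∞ q m (fun _ => 1) = 1 := by
  have hseq : besovSeq s m ∞ (fun _ : Euc d => (1 : ℂ)) = fun _ => 0 := by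
    ext k
    simp [besovSeq, omegaMod_const hm]
  rw [besovNorm_eq, hseq, lqNat_zero hq, add_zero, eLpNorm_exponent_top,
    eLpNormEssSup_const _ (NeZero.ne volume)]
  simp

end Algebra

section Multiplier

variable {d : ℕ} {s : ℝ} {p q : ℝ≥0∞} {m : ℕ} {f : Euc d → ℂ}

theorem besovNorm_le_multNorm (hone : MemBesov d s p q m fun _ => 1)
    (hone_le : besovNorm d s p q m (fun _ => 1) ≤ 1) (f : Euc d → ℂ) :
    besovNorm d s p q m f ≤ multNorm d s p q m f :=
  calc besovNorm d s p q m f = besovNorm d s p q m fun x => f x * 1 := by simp only [mul_one]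
    _ ≤ multNorm d s p q m f := le_iSup₂ (f := fun (g : Euc d → ℂ) (_ : MemBesov d s p q m g ∧
          besovNorm d s p q m g ≤ 1) => besovNorm d s p q m fun x => f x * g x) _ ⟨hone, hone_le⟩

theorem multNorm_le_mul_besovNorm {K : ℝ≥0∞} (hK : ∀ g, MemBesov d s p q m g →
    besovNorm d s p q m (fun x => f x * g x)
      ≤ K * (besovNorm d s p q m f * besovNorm d s p q m g)) :
    multNorm d s p q m f ≤ K * besovNorm d s p q m f :=
  iSup₂_le fun g ⟨hg, hg_le⟩ => (hK g hg).trans (by gcongr; exact mul_le_of_le_one_right' hg_le)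

end Multiplier

theorem statement3_general (d : ℕ) (q : ℝ≥0∞) (s : ℝ)
    (hq : 0 < q) (hs : 0 < s)
    (m : ℕ) (hm : s < m) :
    (∀ f : Euc d → ℂ, MemMult d s ∞ q m f ↔ MemBesov d s ∞ q m f) ∧
    ∃ C₁ C₂ : ℝ≥0,
      (∀ f : Euc d → ℂ, MemMult d s ∞ q m f →
        besovNorm d s ∞ q m f ≤ C₁ * multNorm d s ∞ q m f) ∧
      (∀ f : Euc d → ℂ, MemBesov d s ∞ q m f →
        multNorm d s ∞ q m f ≤ C₂ * besovNorm d s ∞ q m f) := by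
  obtain ⟨K, hK, hmul⟩ := besovNorm_mul_le (d := d) hq.ne' hs.le hm
  have hone : besovNorm d s ∞ q m (fun _ => 1) = 1 :=
    besovNorm_one hq.ne' (by exact_mod_cast hs.trans hm) s
  have hone_mem : MemBesov d s ∞ q m fun _ => 1 :=
    ⟨aestronglyMeasurable_const, hone ▸ one_lt_top⟩
  have hmem_mul : ∀ f g, MemBesov d s ∞ q m f → MemBesov d s ∞ q m g →
      MemBesov d s ∞ q m fun x => f x * g x := fun f g hf hg =>
    ⟨hf.1.mul hg.1, (hmul f g hf.1 hg.1).trans_lt (mul_lt_top hK.lt_top (mul_lt_top hf.2 hg.2))⟩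
  refine ⟨fun f => ⟨fun hf => by simpa using hf _ hone_mem, fun hf g hg => hmem_mul f g hf hg⟩,
    1, K.toNNReal, fun f _ => ?_, fun f hf => ?_⟩
  · rw [ENNReal.coe_one, one_mul]
    exact besovNorm_le_multNorm hone_mem hone.le f
  · rw [ENNReal.coe_toNNReal hK]
    exact multNorm_le_mul_besovNorm fun g hg => hmul f g hf.1 hg.1

/-- for `s > 0` and `0 < q ≤ ∞`,
`M(B^s_{∞,q}(ℝ^d)) = B^s_{∞,q}(ℝ^d)` with equivalent quasi-norms. -/
theorem statement3 (d : ℕ) (hd : 1 ≤ d) (q : ℝ≥0∞) (s : ℝ)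
    (hq : 0 < q) (hs : 0 < s)
    (m : ℕ) (hm : s < m) :
    (∀ f : Euc d → ℂ, MemMult d s ∞ q m f ↔ MemBesov d s ∞ q m f) ∧
    ∃ C₁ C₂ : ℝ≥0,
      (∀ f : Euc d → ℂ, MemMult d s ∞ q m f →
        besovNorm d s ∞ q m f ≤ C₁ * multNorm d s ∞ q m f) ∧
      (∀ f : Euc d → ℂ, MemBesov d s ∞ q m f →
        multNorm d s ∞ q m f ≤ C₂ * besovNorm d s ∞ q m f) :=
  statement3_general d q s hq hs m hm
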